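/- arXiv:math/0511614 — 4 statements merged into one kernel-verified Lean document; each statement's English description precedes it below -/
import Mathlib

section
/- Let 𝒜' ⊂ 𝒜 be a nonempty proper subset, ℜ_* ⊂ ℜ an 𝒜'-decorated Rauzy class, M ∈ ℕ and q ∈ ℝ₊^𝒜. Let Γ ⊂ Π_*(ℜ_*) be a family of 𝒜'-colored paths such that N_{𝒜∖𝒜'}(B_γ·q) ≥ 2^M·N_{𝒜∖𝒜'}(q) for every γ ∈ Γ. Then for every π ∈ ℜ_*, P_q(Γ | π) := Leb(∪{Λ_{q,γ} : γ ∈ Γ starts at π}) / Leb(Λ_q) ≤ 2^{−M}. -/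
/-!
For `q > 0` consider the potential `Φ(q) = N_{𝒜∖𝒜'}(q) · Leb(Λ_q)`. Since `Leb(Λ_q)` is a
constant multiple of `∏_α q_α⁻¹`, `Φ(q)` is proportional to `∏_{α ∈ 𝒜'} q_α⁻¹`. An arrow
replaces `q_β` by `q_α + q_β` (winner `α`, loser `β`), so `Φ` never increases along an arrow,
and if both arrows leaving `π` are `𝒜'`-colored they exchange winner and loser, whence
`Φ(B_top q) + Φ(B_bot q) = Φ(q)`. As `B_γ^*` preserves Lebesgue measure, induction on the
length gives `c · Leb(⋃ Λ_{q,γ}) ≤ Φ(q)`, the union running over the `𝒜'`-colored paths `γ`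
from `π` with `N_{𝒜∖𝒜'}(B_γ q) ≥ c`; no disjointness of the `Λ_{q,γ}` is needed. Take
`c = 2^M N_{𝒜∖𝒜'}(q)`.
-/

open scoped BigOperators
open Matrix

/-- A permutation pair: two bijections from the alphabet onto `Fin d`
(positions are 0-based; "position k" in 1-based terms corresponds to value `k-1`). -/
structure PermPair (A : Type) [Fintype A] where
  top : A ≃ Fin (Fintype.card A)
  bot : A ≃ Fin (Fintype.card A)

namespace Rauzy

variable {A : Type} [Fintype A] [DecidableEq A]

/-- Irreducibility of a permutation pair. -/
def Irreducible (π : PermPair A) : Prop :=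
  ∀ k : ℕ, 0 < k → k < Fintype.card A →
    {a : A | (π.top a : ℕ) < k} ≠ {a : A | (π.bot a : ℕ) < k}

/-- The top operation of Rauzy induction, with its winner and loser. -/
def IsTopStep (π π' : PermPair A) (w l : A) : Prop :=
  (π.top w : ℕ) = Fintype.card A - 1 ∧
  (π.bot l : ℕ) = Fintype.card A - 1 ∧
  π'.top = π.top ∧
  ((π'.bot l : ℕ) = (π.bot w : ℕ) + 1) ∧
  ∀ ξ : A, ξ ≠ l →
    (π'.bot ξ : ℕ) =
      if (π.bot ξ : ℕ) ≤ (π.bot w : ℕ) then (π.bot ξ : ℕ) else (π.bot ξ : ℕ) + 1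

/-- The bottom operation of Rauzy induction, with its winner and loser. -/
def IsBottomStep (π π' : PermPair A) (w l : A) : Prop :=
  (π.bot w : ℕ) = Fintype.card A - 1 ∧
  (π.top l : ℕ) = Fintype.card A - 1 ∧
  π'.bot = π.bot ∧
  ((π'.top l : ℕ) = (π.top w : ℕ) + 1) ∧
  ∀ ξ : A, ξ ≠ l →
    (π'.top ξ : ℕ) =
      if (π.top ξ : ℕ) ≤ (π.top w : ℕ) then (π.top ξ : ℕ) else (π.top ξ : ℕ) + 1

/-- One step (arrow) of the Rauzy diagram. -/
def IsStep (π π' : PermPair A) (w l : A) : Prop :=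
  IsTopStep π π' w l ∨ IsBottomStep π π' w l

/-- A Rauzy class: a minimal nonempty set of irreducible permutation pairs
invariant under both Rauzy operations. -/
def IsRauzyClass (R : Set (PermPair A)) : Prop :=
  R.Nonempty ∧ (∀ π ∈ R, Irreducible π) ∧
  (∀ π ∈ R, ∀ π' w l, IsStep π π' w l → π' ∈ R) ∧
  ∀ R' : Set (PermPair A), R' ⊆ R → R'.Nonempty →
    (∀ π ∈ R', ∀ π' w l, IsStep π π' w l → π' ∈ R') → R' = R

/-- An arrow of the Rauzy diagram (datum). -/
structure Arrow (A : Type) [Fintype A] where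
  src : PermPair A
  dst : PermPair A
  winner : A
  loser : A

/-- Validity of an arrow. -/
def Arrow.Valid (a : Arrow A) : Prop := IsStep a.src a.dst a.winner a.loser

/-- The arrows form a chain of valid arrows starting at the given vertex. -/
def ChainFrom : PermPair A → List (Arrow A) → Prop
  | _, [] => True
  | π, a :: rest => a.src = π ∧ a.Valid ∧ ChainFrom a.dst rest

/-- A path in the Rauzy diagram: a start vertex and a list of arrows.
Trivial paths (empty arrow lists) are identified with vertices. -/
structure RPath (A : Type) [Fintype A] where
  start : PermPair A
  arrows : List (Arrow A)

/-- The endpoint of a path. -/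
def RPath.endp (p : RPath A) : PermPair A :=
  p.arrows.foldl (fun _ a => a.dst) p.start

/-- A path belongs to `Π(ℜ)`. -/
def RPath.IsValid (R : Set (PermPair A)) (p : RPath A) : Prop :=
  p.start ∈ R ∧ ChainFrom p.start p.arrows

/-- The matrix `B_γ` of an arrow: `B_γ · e_ξ = e_ξ` for `ξ ≠ winner` and
`B_γ · e_winner = e_winner + e_loser`. -/
noncomputable def arrowMatrix (a : Arrow A) : Matrix A A ℝ :=
  1 + Matrix.single a.loser a.winner 1

/-- The matrix `B_γ` of a path, with `B_{γ₁γ₂} = B_{γ₂} · B_{γ₁}`. -/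
noncomputable def pathMatrix (p : RPath A) : Matrix A A ℝ :=
  p.arrows.foldl (fun M a => arrowMatrix a * M) 1

/-- `Λ_q = {λ ∈ ℝ₊^𝒜 : ⟨λ, q⟩ < 1}`. -/
def Lambda (q : A → ℝ) : Set (A → ℝ) :=
  {l | (∀ a, 0 < l a) ∧ ∑ a, l a * q a < 1}

/-- `Λ_{q,γ} = B_γ^* · Λ_{B_γ · q}`. -/
noncomputable def lamSet (q : A → ℝ) (p : RPath A) : Set (A → ℝ) :=
  (fun l => (pathMatrix p)ᵀ.mulVec l) '' Lambda ((pathMatrix p).mulVec q)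

/-- `Leb(∪_{γ ∈ Γ} Λ_{q,γ}) / Leb(Λ_q)`. -/
noncomputable def famProb (q : A → ℝ) (Γ : Set (RPath A)) : ℝ :=
  (MeasureTheory.volume (⋃ p ∈ Γ, lamSet q p)).toReal /
    (MeasureTheory.volume (Lambda q)).toReal

/-- `P_q(𝒫 | π)`: the relative Lebesgue measure of the union of the `Λ_{q,γ}`
over paths `γ ∈ Π(ℜ)` starting at `π` and satisfying `𝒫`. -/
noncomputable def pathProb (R : Set (PermPair A)) (q : A → ℝ) (π : PermPair A)
    (P : RPath A → Prop) : ℝ :=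
  famProb q {p : RPath A | p.IsValid R ∧ p.start = π ∧ P p}

/-- `M_{𝒜'}(q) = max_{α ∈ 𝒜'} q_α`. -/
noncomputable def bigM (S : Finset A) (q : A → ℝ) : ℝ :=
  if h : S.Nonempty then S.sup' h q else 0

/-- `M(q) = max_{α ∈ 𝒜} q_α`. -/
noncomputable def MM (q : A → ℝ) : ℝ := bigM Finset.univ q

/-- `m(q) = min_{α ∈ 𝒜} q_α`. -/
noncomputable def littleM (q : A → ℝ) : ℝ :=
  if h : (Finset.univ : Finset A).Nonempty then Finset.univ.inf' h q else 0

/-- A path is complete if every letter wins in at least one of its arrows. -/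
def RPath.Complete (p : RPath A) : Prop :=
  ∀ a : A, ∃ arr ∈ p.arrows, arr.winner = a

/-- A path is `k`-complete if it is a concatenation of `k` complete paths. -/
def RPath.KComplete (p : RPath A) (k : ℕ) : Prop :=
  ∃ L : List (List (Arrow A)), L.length = k ∧ L.flatten = p.arrows ∧
    ∀ seg ∈ L, ∀ a : A, ∃ arr ∈ seg, arr.winner = a

/-- A path is positive if all entries of its matrix are positive. -/
def RPath.Positive (p : RPath A) : Prop :=
  ∀ x y : A, 0 < pathMatrix p x y

/-- The cone `Θ_π`. -/
def Theta (π : PermPair A) : Set (A → ℝ) :=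
  {τ | ∀ k : ℕ, 0 < k → k < Fintype.card A →
     (0 < ∑ ξ ∈ Finset.univ.filter (fun ξ => (π.top ξ : ℕ) < k), τ ξ) ∧
     (∑ ξ ∈ Finset.univ.filter (fun ξ => (π.bot ξ : ℕ) < k), τ ξ < 0)}

end Rauzy

namespace Rauzy

variable {A : Type} [Fintype A] [DecidableEq A]

/-- `π` and `π'` can be joined by an `𝒜'`-colored path (all winners in `S`). -/
def JoinedBy (R : Set (PermPair A)) (S : Finset A) (π π' : PermPair A) : Prop :=
  ∃ p : RPath A, p.IsValid R ∧ (∀ arr ∈ p.arrows, arr.winner ∈ S) ∧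
    p.start = π ∧ p.endp = π'

/-- An `𝒜'`-decorated Rauzy class: a maximal subset of `R` whose elements can be
pairwise joined by `𝒜'`-colored paths. -/
def IsDecorated (R : Set (PermPair A)) (S : Finset A) (Rs : Set (PermPair A)) : Prop :=
  Rs ⊆ R ∧ Rs.Nonempty ∧ (∀ π ∈ Rs, ∀ π' ∈ Rs, JoinedBy R S π π') ∧
  ∀ Rs' : Set (PermPair A), Rs ⊆ Rs' → Rs' ⊆ R →
    (∀ π ∈ Rs', ∀ π' ∈ Rs', JoinedBy R S π π') → Rs' = Rs

end Rauzy

open MeasureTheory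
open scoped ENNReal

namespace Rauzy

variable {A : Type} [Fintype A]

def _root_.PermPair.swap (π : PermPair A) : PermPair A := ⟨π.bot, π.top⟩

theorem _root_.PermPair.swap_involutive :
    Function.Involutive (PermPair.swap : PermPair A → PermPair A) :=
  fun _ => rfl

attribute [ext] PermPair Arrow

theorem isBottomStep_iff_isTopStep_swap {π π' : PermPair A} {w l : A} :
    IsBottomStep π π' w l ↔ IsTopStep π.swap π'.swap w l :=
  Iff.rfl

section Steps

variable {π π₁ π₂ : PermPair A} {w₁ l₁ w₂ l₂ : A}

theorem IsTopStep.unique (h₁ : IsTopStep π π₁ w₁ l₁) (h₂ : IsTopStep π π₂ w₂ l₂) :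
    w₁ = w₂ ∧ l₁ = l₂ ∧ π₁ = π₂ := by
  obtain ⟨hw₁, hl₁, htop₁, hbot₁, hrest₁⟩ := h₁
  obtain ⟨hw₂, hl₂, htop₂, hbot₂, hrest₂⟩ := h₂
  have hw : w₁ = w₂ := π.top.injective (Fin.ext (hw₁.trans hw₂.symm))
  have hl : l₁ = l₂ := π.bot.injective (Fin.ext (hl₁.trans hl₂.symm))
  subst hw hl
  refine ⟨rfl, rfl, PermPair.ext (htop₁.trans htop₂.symm) (Equiv.ext fun ξ => Fin.ext ?_)⟩
  by_cases hξ : ξ = l₁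
  · rw [hξ, hbot₁, hbot₂]
  · rw [hrest₁ ξ hξ, hrest₂ ξ hξ]

theorem IsBottomStep.unique (h₁ : IsBottomStep π π₁ w₁ l₁) (h₂ : IsBottomStep π π₂ w₂ l₂) :
    w₁ = w₂ ∧ l₁ = l₂ ∧ π₁ = π₂ :=
  let ⟨hw, hl, hπ⟩ := IsTopStep.unique (isBottomStep_iff_isTopStep_swap.mp h₁)
    (isBottomStep_iff_isTopStep_swap.mp h₂)
  ⟨hw, hl, PermPair.swap_involutive.injective hπ⟩

theorem IsTopStep.loser_ne_winner (h : IsTopStep π π₁ w₁ l₁) : l₁ ≠ w₁ := by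
  rintro rfl
  obtain ⟨-, hl, -, hbot, -⟩ := h
  have := (π₁.bot l₁).isLt
  omega

theorem IsBottomStep.loser_ne_winner (h : IsBottomStep π π₁ w₁ l₁) : l₁ ≠ w₁ :=
  IsTopStep.loser_ne_winner (isBottomStep_iff_isTopStep_swap.mp h)

theorem Arrow.Valid.loser_ne_winner {e : Arrow A} (h : e.Valid) : e.loser ≠ e.winner :=
  h.elim IsTopStep.loser_ne_winner IsBottomStep.loser_ne_winner

theorem IsBottomStep.winner_eq_loser (hB : IsBottomStep π π₂ w₂ l₂)
    (hT : IsTopStep π π₁ w₁ l₁) : w₂ = l₁ :=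
  π.bot.injective (Fin.ext (hB.1.trans hT.2.1.symm))

theorem IsBottomStep.loser_eq_winner (hB : IsBottomStep π π₂ w₂ l₂)
    (hT : IsTopStep π π₁ w₁ l₁) : l₂ = w₁ :=
  π.top.injective (Fin.ext (hB.2.1.trans hT.1.symm))

end Steps

theorem subsingleton_topArrows (π : PermPair A) :
    {e : Arrow A | e.src = π ∧ IsTopStep π e.dst e.winner e.loser}.Subsingleton := by
  rintro e₁ ⟨hs₁, h₁⟩ e₂ ⟨hs₂, h₂⟩
  obtain ⟨hw, hl, hd⟩ := h₁.unique h₂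
  exact Arrow.ext (hs₁.trans hs₂.symm) hd hw hl

theorem subsingleton_bottomArrows (π : PermPair A) :
    {e : Arrow A | e.src = π ∧ IsBottomStep π e.dst e.winner e.loser}.Subsingleton := by
  rintro e₁ ⟨hs₁, h₁⟩ e₂ ⟨hs₂, h₂⟩
  obtain ⟨hw, hl, hd⟩ := h₁.unique h₂
  exact Arrow.ext (hs₁.trans hs₂.symm) hd hw hl

theorem image_transpose_mulVec_Lambda_subset {B : Matrix A A ℝ}
    (hB : ∀ h : A → ℝ, (∀ a, 0 < h a) → ∀ a, 0 < (Bᵀ *ᵥ h) a) (q : A → ℝ) :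
    (Bᵀ *ᵥ ·) '' Lambda (B *ᵥ q) ⊆ Lambda q := by
  rintro _ ⟨h, ⟨hpos, hsum⟩, rfl⟩
  refine ⟨hB h hpos, ?_⟩
  change (Bᵀ *ᵥ h) ⬝ᵥ q < 1
  rwa [Matrix.mulVec_transpose, ← Matrix.dotProduct_mulVec]

variable [DecidableEq A]

theorem one_add_single_mulVec {R : Type*} [NonAssocSemiring R] (i j : A) (v : A → R) :
    (1 + Matrix.single i j 1) *ᵥ v = Function.update v i (v i + v j) := by
  ext a
  rw [Matrix.add_mulVec, Matrix.one_mulVec, Matrix.single_mulVec, one_mul]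
  rcases eq_or_ne a i with rfl | h <;> simp [*]

theorem arrowMatrix_mulVec (e : Arrow A) (v : A → ℝ) :
    arrowMatrix e *ᵥ v = Function.update v e.loser (v e.loser + v e.winner) :=
  one_add_single_mulVec _ _ _

theorem transpose_arrowMatrix_mulVec (e : Arrow A) (v : A → ℝ) :
    (arrowMatrix e)ᵀ *ᵥ v = Function.update v e.winner (v e.winner + v e.loser) := by
  rw [arrowMatrix, Matrix.transpose_add, Matrix.transpose_one, Matrix.transpose_single,
    one_add_single_mulVec]

theorem det_arrowMatrix {e : Arrow A} (he : e.Valid) : (arrowMatrix e).det = 1 :=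
  Matrix.det_transvection_of_ne _ _ he.loser_ne_winner 1

theorem update_add_pos {ι : Type*} [DecidableEq ι] {v : ι → ℝ} (hv : ∀ a, 0 < v a) (i j a : ι) :
    0 < Function.update v i (v i + v j) a := by
  rcases eq_or_ne a i with rfl | h
  · simpa using add_pos (hv a) (hv j)
  · simpa [h] using hv a

theorem arrowMatrix_mulVec_pos {q : A → ℝ} (hq : ∀ a, 0 < q a) (e : Arrow A) (a : A) :
    0 < (arrowMatrix e *ᵥ q) a := by
  rw [arrowMatrix_mulVec]
  exact update_add_pos hq _ _ a

theorem foldl_arrowMatrix_mul (l : List (Arrow A)) (M : Matrix A A ℝ) :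
    l.foldl (fun M a => arrowMatrix a * M) M = l.foldl (fun M a => arrowMatrix a * M) 1 * M := by
  induction l generalizing M with
  | nil => simp
  | cons e rest ih =>
    rw [List.foldl_cons, List.foldl_cons, ih, ih (arrowMatrix e * 1), mul_one, mul_assoc]

theorem pathMatrix_cons (π π' : PermPair A) (e : Arrow A) (rest : List (Arrow A)) :
    pathMatrix ⟨π, e :: rest⟩ = pathMatrix ⟨π', rest⟩ * arrowMatrix e := by
  rw [pathMatrix, List.foldl_cons, foldl_arrowMatrix_mul, mul_one]
  rfl

theorem lamSet_cons (q : A → ℝ) (π π' : PermPair A) (e : Arrow A) (rest : List (Arrow A)) :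
    lamSet q ⟨π, e :: rest⟩ =
      ((arrowMatrix e)ᵀ *ᵥ ·) '' lamSet (arrowMatrix e *ᵥ q) ⟨π', rest⟩ := by
  simp only [lamSet, Set.image_image, pathMatrix_cons π π', Matrix.transpose_mul,
    Matrix.mulVec_mulVec]

theorem lamSet_subset_Lambda (q : A → ℝ) (γ : RPath A) : lamSet q γ ⊆ Lambda q := by
  obtain ⟨π, arrows⟩ := γ
  induction arrows generalizing q with
  | nil => simp [lamSet, pathMatrix]
  | cons e rest ih =>
    rw [lamSet_cons q π π e]
    refine (Set.image_mono (ih _)).trans (image_transpose_mulVec_Lambda_subset ?_ q)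
    intro h hh a
    rw [transpose_arrowMatrix_mulVec]
    exact update_add_pos hh _ _ a

theorem volume_image_mulVec (B : Matrix A A ℝ) (s : Set (A → ℝ)) :
    volume ((B *ᵥ ·) '' s) = ENNReal.ofReal |B.det| * volume s := by
  have hB : (B *ᵥ ·) = ⇑(Matrix.toLin' B) := funext fun v => (Matrix.toLin'_apply B v).symm
  rw [hB, Measure.addHaar_image_linearMap, LinearMap.det_toLin']

theorem volume_image_transpose_arrowMatrix {e : Arrow A} (he : e.Valid) (s : Set (A → ℝ)) :
    volume (((arrowMatrix e)ᵀ *ᵥ ·) '' s) = volume s := by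
  rw [volume_image_mulVec, Matrix.det_transpose, det_arrowMatrix he, abs_one, ENNReal.ofReal_one,
    one_mul]

theorem Lambda_eq_image_diagonal {q : A → ℝ} (hq : ∀ a, 0 < q a) :
    Lambda q = (Matrix.diagonal (fun a => (q a)⁻¹) *ᵥ ·) '' Lambda (1 : A → ℝ) := by
  have hdiag : ∀ x : A → ℝ, Matrix.diagonal (fun a => (q a)⁻¹) *ᵥ x = fun a => (q a)⁻¹ * x a :=
    fun x => funext fun a => Matrix.mulVec_diagonal _ _ a
  ext l
  simp only [Lambda, Set.mem_image, Set.mem_ofPred_eq, hdiag, Pi.one_apply, mul_one]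
  constructor
  · rintro ⟨hpos, hsum⟩
    refine ⟨fun a => l a * q a, ⟨fun a => mul_pos (hpos a) (hq a), hsum⟩, funext fun a => ?_⟩
    field_simp [(hq a).ne']
  · rintro ⟨x, ⟨hx, hsum⟩, rfl⟩
    refine ⟨fun a => mul_pos (inv_pos.2 (hq a)) (hx a), ?_⟩
    convert hsum using 2 with a
    field_simp [(hq a).ne']

theorem volume_Lambda {q : A → ℝ} (hq : ∀ a, 0 < q a) :
    volume (Lambda q) = ENNReal.ofReal (∏ a, (q a)⁻¹) * volume (Lambda (1 : A → ℝ)) := by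
  rw [Lambda_eq_image_diagonal hq, volume_image_mulVec, Matrix.det_diagonal,
    abs_of_nonneg (Finset.prod_nonneg fun a _ => (inv_pos.2 (hq a)).le : 0 ≤ ∏ a, (q a)⁻¹)]

theorem volume_Lambda_ne_top {q : A → ℝ} (hq : ∀ a, 0 < q a) : volume (Lambda q) ≠ ⊤ := by
  have hbox : Lambda (1 : A → ℝ) ⊆ Set.univ.pi fun _ => Set.Ioo 0 1 := by
    rintro l ⟨hpos, hsum⟩ a -
    simp only [Pi.one_apply, mul_one] at hsum
    exact ⟨hpos a, (Finset.single_le_sum (fun b _ => (hpos b).le) (Finset.mem_univ a)).trans_lt hsum⟩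
  have h1 : volume (Lambda (1 : A → ℝ)) ≠ ⊤ :=
    ne_top_of_le_ne_top (by simp [volume_pi_pi, Real.volume_Ioo]) (measure_mono hbox)
  rw [volume_Lambda hq]
  exact ENNReal.mul_ne_top ENNReal.ofReal_ne_top h1

noncomputable def potential (S : Finset A) (q : A → ℝ) : ℝ≥0∞ :=
  ENNReal.ofReal (∏ a ∈ Finset.univ \ S, q a) * volume (Lambda q)

theorem potential_eq (S : Finset A) {q : A → ℝ} (hq : ∀ a, 0 < q a) :
    potential S q = ENNReal.ofReal (∏ a ∈ S, (q a)⁻¹) * volume (Lambda (1 : A → ℝ)) := by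
  have hprod : (∏ a ∈ Finset.univ \ S, q a) * ∏ a, (q a)⁻¹ = ∏ a ∈ S, (q a)⁻¹ := by
    rw [← Finset.prod_sdiff (Finset.subset_univ S), ← mul_assoc, ← Finset.prod_mul_distrib,
      Finset.prod_eq_one fun a _ => mul_inv_cancel₀ (hq a).ne', one_mul]
  rw [potential, volume_Lambda hq, ← mul_assoc, ← ENNReal.ofReal_mul
    (Finset.prod_nonneg fun a _ => (hq a).le), hprod]

theorem potential_arrowMatrix_mulVec_le (S : Finset A) {q : A → ℝ} (hq : ∀ a, 0 < q a)
    (e : Arrow A) : potential S (arrowMatrix e *ᵥ q) ≤ potential S q := by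
  rw [potential_eq S (arrowMatrix_mulVec_pos hq e), potential_eq S hq]
  gcongr with a
  · exact fun a _ => (inv_pos.2 (arrowMatrix_mulVec_pos hq e a)).le
  · exact hq a
  · rw [arrowMatrix_mulVec]
    rcases eq_or_ne a e.loser with rfl | h
    · simpa using (hq e.winner).le
    · simp [h]

theorem potential_update_of_mem (S : Finset A) {q : A → ℝ} (hq : ∀ a, 0 < q a) {i : A}
    (hi : i ∈ S) (j : A) :
    potential S (Function.update q i (q i + q j)) =
      ENNReal.ofReal (q i / (q i + q j)) * potential S q := by
  have hprod : ∏ a ∈ S, (Function.update q i (q i + q j) a)⁻¹ =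
      q i / (q i + q j) * ∏ a ∈ S, (q a)⁻¹ := by
    rw [← Finset.mul_prod_erase S _ hi, ← Finset.mul_prod_erase S (fun a => (q a)⁻¹) hi,
      Function.update_self, ← mul_assoc, div_mul_eq_mul_div, mul_inv_cancel₀ (hq i).ne', one_div]
    congr 1
    exact Finset.prod_congr rfl fun a ha => by rw [Function.update_of_ne (Finset.ne_of_mem_erase ha)]
  rw [potential_eq S (update_add_pos hq i j), potential_eq S hq, hprod, ENNReal.ofReal_mul
    (div_nonneg (hq i).le (add_pos (hq i) (hq j)).le), mul_assoc]

theorem potential_update_add_potential_update (S : Finset A) {q : A → ℝ} (hq : ∀ a, 0 < q a)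
    {i j : A} (hi : i ∈ S) (hj : j ∈ S) :
    potential S (Function.update q i (q i + q j)) + potential S (Function.update q j (q j + q i)) =
      potential S q := by
  have hsum : q i / (q i + q j) + q j / (q j + q i) = 1 := by
    rw [add_comm (q j), ← add_div, div_self (add_pos (hq i) (hq j)).ne']
  rw [potential_update_of_mem S hq hi, potential_update_of_mem S hq hj, ← add_mul,
    ← ENNReal.ofReal_add (div_nonneg (hq i).le (add_pos (hq i) (hq j)).le)
      (div_nonneg (hq j).le (add_pos (hq j) (hq i)).le), hsum, ENNReal.ofReal_one, one_mul]

theorem potential_add_potential_of_isTopStep_of_isBottomStep (S : Finset A) {q : A → ℝ} (hq : ∀ a, 0 < q a)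
    {π : PermPair A} {eT eB : Arrow A} (hT : IsTopStep π eT.dst eT.winner eT.loser)
    (hB : IsBottomStep π eB.dst eB.winner eB.loser) (hwT : eT.winner ∈ S) (hwB : eB.winner ∈ S) :
    potential S (arrowMatrix eT *ᵥ q) + potential S (arrowMatrix eB *ᵥ q) = potential S q := by
  rw [hB.winner_eq_loser hT] at hwB
  rw [arrowMatrix_mulVec, arrowMatrix_mulVec, hB.winner_eq_loser hT, hB.loser_eq_winner hT,
    potential_update_add_potential_update S hq hwB hwT]

theorem ofReal_mul_volume_biUnion_le_potential (S : Finset A) {q : A → ℝ} (hq : ∀ a, 0 < q a)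
    (π : PermPair A) (c : ℝ) (V : Arrow A → Set (A → ℝ))
    (hV : ∀ e : Arrow A, e.src = π → e.Valid → e.winner ∈ S →
      ENNReal.ofReal c * volume (V e) ≤ potential S (arrowMatrix e *ᵥ q)) :
    ENNReal.ofReal c * volume (⋃ e ∈ {e : Arrow A | e.src = π ∧ e.Valid ∧ e.winner ∈ S}, V e) ≤
      potential S q := by
  set E := {e : Arrow A | e.src = π ∧ e.Valid ∧ e.winner ∈ S}
  set ET := {e ∈ E | IsTopStep π e.dst e.winner e.loser}
  set EB := {e ∈ E | IsBottomStep π e.dst e.winner e.loser}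
  have hsplit : E = ET ∪ EB := by
    rw [← Set.sep_or, eq_comm, Set.sep_eq_self_iff_mem_true]
    rintro e ⟨rfl, hv, -⟩
    exact hv
  have hsingle : ∀ e ∈ E, ENNReal.ofReal c * volume (V e) ≤ potential S q :=
    fun e ⟨hs, hv, hw⟩ => (hV e hs hv hw).trans (potential_arrowMatrix_mulVec_le S hq e)
  have hET : ET.Subsingleton := (subsingleton_topArrows π).anti fun e he => ⟨he.1.1, he.2⟩
  have hEB : EB.Subsingleton := (subsingleton_bottomArrows π).anti fun e he => ⟨he.1.1, he.2⟩
  rw [hsplit, Set.biUnion_union]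
  refine (mul_le_mul_right (measure_union_le _ _) _).trans ?_
  rw [mul_add]
  rcases hET.eq_empty_or_singleton with hT | ⟨eT, hT⟩ <;>
    rcases hEB.eq_empty_or_singleton with hB | ⟨eB, hB⟩
  · simp [hT, hB]
  · simpa [hT, hB] using hsingle eB (Set.sep_subset _ _ (hB ▸ rfl : eB ∈ EB))
  · simpa [hT, hB] using hsingle eT (Set.sep_subset _ _ (hT ▸ rfl : eT ∈ ET))
  · obtain ⟨⟨hsT, hvT, hwT⟩, hTstep⟩ : eT ∈ ET := hT ▸ rfl
    obtain ⟨⟨hsB, hvB, hwB⟩, hBstep⟩ : eB ∈ EB := hB ▸ rfl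
    simp only [hT, hB, Set.mem_singleton_iff, Set.iUnion_iUnion_eq_left]
    calc ENNReal.ofReal c * volume (V eT) + ENNReal.ofReal c * volume (V eB)
        ≤ potential S (arrowMatrix eT *ᵥ q) + potential S (arrowMatrix eB *ᵥ q) :=
          add_le_add (hV eT hsT hvT hwT) (hV eB hsB hvB hwB)
      _ = potential S q :=
          potential_add_potential_of_isTopStep_of_isBottomStep S hq hTstep hBstep hwT hwB

theorem ofReal_mul_volume_biUnion_lamSet_le_potential (S : Finset A) {q : A → ℝ} {c : ℝ}
    (hc : c ≤ ∏ a ∈ Finset.univ \ S, q a) (G : Set (RPath A)) :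
    ENNReal.ofReal c * volume (⋃ γ ∈ G, lamSet q γ) ≤ potential S q := by
  unfold potential
  gcongr
  exact Set.iUnion₂_subset fun γ _ => lamSet_subset_Lambda q γ

-- The `start` field is left free: `lamSet` and `pathMatrix` only read the arrows.
def thresholdPaths (S : Finset A) (π : PermPair A) (q : A → ℝ) (c : ℝ) (n : ℕ) :
    Set (RPath A) :=
  {γ | ChainFrom π γ.arrows ∧ (∀ e ∈ γ.arrows, e.winner ∈ S) ∧ γ.arrows.length ≤ n ∧
    c ≤ ∏ a ∈ Finset.univ \ S, (pathMatrix γ *ᵥ q) a}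

theorem thresholdPaths_mono (S : Finset A) (π : PermPair A) (q : A → ℝ) (c : ℝ) :
    Monotone (thresholdPaths S π q c) :=
  fun _ _ hmn _ ⟨hchain, hcol, hlen, hc⟩ => ⟨hchain, hcol, hlen.trans hmn, hc⟩

theorem le_of_nil_mem_thresholdPaths {S : Finset A} {π π₀ : PermPair A} {q : A → ℝ} {c : ℝ}
    {n : ℕ} (h : ⟨π₀, []⟩ ∈ thresholdPaths S π q c n) : c ≤ ∏ a ∈ Finset.univ \ S, q a := by
  simpa [pathMatrix] using h.2.2.2

theorem mem_thresholdPaths_of_cons_mem {S : Finset A} {π π₀ : PermPair A} {q : A → ℝ} {c : ℝ}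
    {n : ℕ} {e : Arrow A} {rest : List (Arrow A)}
    (h : ⟨π₀, e :: rest⟩ ∈ thresholdPaths S π q c (n + 1)) :
    e.src = π ∧ e.Valid ∧ e.winner ∈ S ∧
      ⟨e.dst, rest⟩ ∈ thresholdPaths S e.dst (arrowMatrix e *ᵥ q) c n := by
  obtain ⟨⟨hsrc, hvalid, hchain⟩, hcol, hlen, hc⟩ := h
  refine ⟨hsrc, hvalid, hcol e List.mem_cons_self, hchain,
    fun e' he' => hcol e' (List.mem_cons_of_mem e he'), Nat.le_of_succ_le_succ hlen, ?_⟩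
  rwa [pathMatrix_cons π₀ e.dst, ← Matrix.mulVec_mulVec] at hc

theorem ofReal_mul_volume_thresholdPaths_le_potential (S : Finset A) (n : ℕ) {q : A → ℝ}
    (hq : ∀ a, 0 < q a) (π : PermPair A) (c : ℝ) :
    ENNReal.ofReal c * volume (⋃ γ ∈ thresholdPaths S π q c n, lamSet q γ) ≤ potential S q := by
  induction n generalizing q π with
  | zero =>
    by_cases hc : c ≤ ∏ a ∈ Finset.univ \ S, q a
    · exact ofReal_mul_volume_biUnion_lamSet_le_potential S hc _
    have hempty : thresholdPaths S π q c 0 = ∅ := by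
      refine Set.eq_empty_of_forall_notMem fun ⟨π₀, arrows⟩ hγ => ?_
      cases arrows with
      | nil => exact hc (le_of_nil_mem_thresholdPaths hγ)
      | cons e rest => exact absurd hγ.2.2.1 (by simp)
    simp [hempty]
  | succ n ih =>
    by_cases hc : c ≤ ∏ a ∈ Finset.univ \ S, q a
    · exact ofReal_mul_volume_biUnion_lamSet_le_potential S hc _
    let V : Arrow A → Set (A → ℝ) := fun e => ((arrowMatrix e)ᵀ *ᵥ ·) ''
      ⋃ δ ∈ thresholdPaths S e.dst (arrowMatrix e *ᵥ q) c n, lamSet (arrowMatrix e *ᵥ q) δ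
    have hcover : ⋃ γ ∈ thresholdPaths S π q c (n + 1), lamSet q γ ⊆
        ⋃ e ∈ {e : Arrow A | e.src = π ∧ e.Valid ∧ e.winner ∈ S}, V e := by
      refine Set.iUnion₂_subset fun ⟨π₀, arrows⟩ hγ => ?_
      cases arrows with
      | nil => exact absurd (le_of_nil_mem_thresholdPaths hγ) hc
      | cons e rest =>
        obtain ⟨hsrc, hvalid, hwin, hδ⟩ := mem_thresholdPaths_of_cons_mem hγ
        rw [lamSet_cons q π₀ e.dst]
        exact (Set.image_mono (Set.subset_biUnion_of_mem hδ)).trans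
          (Set.subset_biUnion_of_mem (u := V) ⟨hsrc, hvalid, hwin⟩)
    refine (mul_le_mul_right (measure_mono hcover) _).trans
      (ofReal_mul_volume_biUnion_le_potential S hq π c V fun e _ he _ => ?_)
    rw [volume_image_transpose_arrowMatrix he]
    exact ih (arrowMatrix_mulVec_pos hq e) e.dst

theorem ofReal_mul_volume_iUnion_thresholdPaths_le_potential (S : Finset A) {q : A → ℝ}
    (hq : ∀ a, 0 < q a) (π : PermPair A) (c : ℝ) :
    ENNReal.ofReal c * volume (⋃ n, ⋃ γ ∈ thresholdPaths S π q c n, lamSet q γ) ≤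
      potential S q := by
  have hmono : Monotone fun n => ⋃ γ ∈ thresholdPaths S π q c n, lamSet q γ :=
    fun _ _ hmn => Set.biUnion_subset_biUnion_left (thresholdPaths_mono S π q c hmn)
  rw [hmono.measure_iUnion, ENNReal.mul_iSup]
  exact iSup_le fun n => ofReal_mul_volume_thresholdPaths_le_potential S n hq π c

theorem famProb_le_one_div {q : A → ℝ} {Γ : Set (RPath A)} {t : ℝ}
    (hΛ : volume (Lambda q) ≠ ⊤) (ht : 0 < t)
    (h : ENNReal.ofReal t * volume (⋃ p ∈ Γ, lamSet q p) ≤ volume (Lambda q)) :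
    famProb q Γ ≤ 1 / t := by
  have h' : t * (volume (⋃ p ∈ Γ, lamSet q p)).toReal ≤ (volume (Lambda q)).toReal := by
    simpa [ENNReal.toReal_mul, ENNReal.toReal_ofReal ht.le] using ENNReal.toReal_mono hΛ h
  rcases (ENNReal.toReal_nonneg (a := volume (Lambda q))).eq_or_lt with hΛ0 | hΛpos
  · rw [famProb, ← hΛ0, div_zero]
    positivity
  · rw [famProb, div_le_div_iff₀ hΛpos ht]
    linarith

theorem reduction_estimate_general
    (R : Set (PermPair A))
    (S : Finset A)
    (Rs : Set (PermPair A))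
    (M : ℕ) (q : A → ℝ) (hq : ∀ a, 0 < q a)
    (Γ : Set (RPath A))
    (hΓ : ∀ γ ∈ Γ, γ.IsValid R ∧ (∀ arr ∈ γ.arrows, arr.winner ∈ S) ∧
      γ.start ∈ Rs ∧ γ.endp ∈ Rs)
    (hN : ∀ γ ∈ Γ, 2 ^ M * ∏ a ∈ Finset.univ \ S, q a
      ≤ ∏ a ∈ Finset.univ \ S, ((pathMatrix γ).mulVec q) a) :
    ∀ π ∈ Rs, famProb q {γ ∈ Γ | γ.start = π} ≤ 1 / 2 ^ M := by
  intro π _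
  set N := ∏ a ∈ Finset.univ \ S, q a
  have hNpos : 0 < N := Finset.prod_pos fun a _ => hq a
  have hcover : ⋃ γ ∈ {γ ∈ Γ | γ.start = π}, lamSet q γ ⊆
      ⋃ n, ⋃ γ ∈ thresholdPaths S π q (2 ^ M * N) n, lamSet q γ := by
    refine Set.iUnion₂_subset fun γ ⟨hγΓ, hγπ⟩ =>
      Set.subset_iUnion_of_subset γ.arrows.length (Set.subset_biUnion_of_mem ?_)
    obtain ⟨⟨-, hchain⟩, hcol, -⟩ := hΓ γ hγΓ
    exact ⟨hγπ ▸ hchain, hcol, le_rfl, hN γ hγΓ⟩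
  refine famProb_le_one_div (volume_Lambda_ne_top hq) (by positivity) ?_
  rw [← ENNReal.mul_le_mul_iff_right (ENNReal.ofReal_pos.2 hNpos).ne' ENNReal.ofReal_ne_top,
    ← mul_assoc, ← ENNReal.ofReal_mul hNpos.le, mul_comm N]
  exact (mul_le_mul_right (measure_mono hcover) _).trans
    (ofReal_mul_volume_iUnion_thresholdPaths_le_potential S hq π _)

/-- Reduction estimate: for a family `Γ` of `𝒜'`-colored paths in `Π_*(ℜ_*)` along which
`N_{𝒜∖𝒜'}` is multiplied by at least `2^M`, the relative measure is at most `2^{-M}`. -/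
theorem reduction_estimate (hd : 2 ≤ Fintype.card A)
    (R : Set (PermPair A)) (hR : IsRauzyClass R)
    (S : Finset A) (hS : S.Nonempty) (hSne : S ≠ Finset.univ)
    (Rs : Set (PermPair A)) (hRs : IsDecorated R S Rs)
    (M : ℕ) (q : A → ℝ) (hq : ∀ a, 0 < q a)
    (Γ : Set (RPath A))
    (hΓ : ∀ γ ∈ Γ, γ.IsValid R ∧ (∀ arr ∈ γ.arrows, arr.winner ∈ S) ∧
      γ.start ∈ Rs ∧ γ.endp ∈ Rs)
    (hN : ∀ γ ∈ Γ, 2 ^ M * ∏ a ∈ Finset.univ \ S, q a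
      ≤ ∏ a ∈ Finset.univ \ S, ((pathMatrix γ).mulVec q) a) :
    ∀ π ∈ Rs, famProb q {γ ∈ Γ | γ.start = π} ≤ 1 / 2 ^ M :=
  reduction_estimate_general R S Rs M q hq Γ hΓ hN

end Rauzy
end

section
/- Let 0 < s < 1 and c ∈ ℂ ∖ {0}. For t ≥ 0 define K(t) = |c|²·e^{t(1+s)}·∫_ℝ∫_ℝ (1+x²)^{−(1+s)/2}·(1+e^{4t}y²)^{−(1+s)/2}·|x−y|^{s−1} dx dy, which equals the correlation ⟨f, ρ_s(g_t)·f⟩ in ℋ_s for f(x) = c·(1+x²)^{−(1+s)/2}. Then K(t) is finite and strictly positive for every t ≥ 0, and lim_{t→+∞} (1/t)·ln K(t) = −1 + s; in particular K(t) decays exponentially at exactly the rate e^{−(1−s)t}. -/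
/-!
After the substitution `y ↦ e^{-2t} y`, the correlation integral is `e^{-2t}` times an integral
that stays between two positive constants for `t ≥ 0`, so `K(t)` is comparable to `e^{(s-1)t}`.
The upper bound comes from Fubini: for a weight `0 ≤ g ≤ 1` in `L¹`, the function
`z ↦ ∫ g(x) |x - z|^{s-1} dx` is bounded, since `|u|^{s-1}` is integrable on `[-1, 1]` and at
most `1` outside it; integrating against `(1 + e^{4t} y²)^{-(1+s)/2}` then costs `e^{-2t}`.
The lower bound comes from the box `[2, 3] × [0, e^{-2t}]`, on which the integrand is bounded
below independently of `t`.
-/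
open MeasureTheory

/-- The integrand of the correlation integral for the complementary series. -/
noncomputable def corrIntegrand (s t : ℝ) (p : ℝ × ℝ) : ℝ :=
  (1 + p.1 ^ 2) ^ (-(1 + s) / 2) * (1 + Real.exp (4 * t) * p.2 ^ 2) ^ (-(1 + s) / 2) *
    |p.1 - p.2| ^ (s - 1)

/-- The correlation `K(t) = ⟨f, ρ_s(g_t)·f⟩` for the `SO(2,ℝ)`-invariant vector
`f(x) = c·(1+x²)^{-(1+s)/2}` of the complementary series representation `ρ_s`. -/
noncomputable def corrK (s : ℝ) (c : ℂ) (t : ℝ) : ℝ :=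
  ‖c‖ ^ 2 * Real.exp (t * (1 + s)) * ∫ p : ℝ × ℝ, corrIntegrand s t p

open Set Filter Topology Real

section RieszKernel

variable {a : ℝ}

theorem integrableOn_abs_rpow_ball (ha : -1 < a) :
    IntegrableOn (fun u : ℝ => |u| ^ a) (Metric.ball 0 1) :=
  integrableOn_ball_of_norm_le_rpow (by simp) (C := 1) (α := -a) (by simp; linarith)
    (ae_of_all _ fun u => by simp [abs_of_nonneg (rpow_nonneg (abs_nonneg u) a)])
    (by fun_prop : Measurable fun u : ℝ => |u| ^ a).aestronglyMeasurable

theorem abs_rpow_le_indicator_add_one (ha : a ≤ 0) (u : ℝ) :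
    |u| ^ a ≤ (Metric.ball 0 1).indicator (fun u => |u| ^ a) u + 1 := by
  by_cases hu : u ∈ Metric.ball 0 1
  · simp [indicator_of_mem hu]
  · rw [indicator_of_notMem hu, zero_add]
    exact rpow_le_one_of_one_le_of_nonpos (by simpa using hu) ha

variable {g : ℝ → ℝ}

theorem mul_abs_sub_rpow_le (ha : a ≤ 0) (hg0 : ∀ x, 0 ≤ g x) (hg1 : ∀ x, g x ≤ 1) (z x : ℝ) :
    g x * |x - z| ^ a ≤ (Metric.ball 0 1).indicator (fun u => |u| ^ a) (x - z) + g x :=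
  calc g x * |x - z| ^ a
      ≤ g x * ((Metric.ball 0 1).indicator (fun u => |u| ^ a) (x - z) + 1) :=
        mul_le_mul_of_nonneg_left (abs_rpow_le_indicator_add_one ha _) (hg0 x)
    _ ≤ (Metric.ball 0 1).indicator (fun u => |u| ^ a) (x - z) + g x := by
        have : 0 ≤ (Metric.ball 0 1).indicator (fun u => |u| ^ a) (x - z) :=
          indicator_nonneg (fun u _ => rpow_nonneg (abs_nonneg u) a) _
        nlinarith [hg1 x]

theorem integrable_mul_abs_sub_rpow (ha : -1 < a) (ha' : a ≤ 0) (hg : Integrable g)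
    (hg0 : ∀ x, 0 ≤ g x) (hg1 : ∀ x, g x ≤ 1) (z : ℝ) :
    Integrable (fun x => g x * |x - z| ^ a) := by
  have hbump := (integrableOn_abs_rpow_ball ha).integrable_indicator measurableSet_ball
  have hkernel : Measurable fun x => |x - z| ^ a := by fun_prop
  exact ((hbump.comp_sub_right z).add hg).mono'
    (hg.aestronglyMeasurable.mul hkernel.aestronglyMeasurable) (ae_of_all _ fun x => by
      rw [norm_of_nonneg (mul_nonneg (hg0 x) (rpow_nonneg (abs_nonneg _) a))]
      exact mul_abs_sub_rpow_le ha' hg0 hg1 z x)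

theorem integral_mul_abs_sub_rpow_le (ha : -1 < a) (ha' : a ≤ 0) (hg : Integrable g)
    (hg0 : ∀ x, 0 ≤ g x) (hg1 : ∀ x, g x ≤ 1) (z : ℝ) :
    ∫ x, g x * |x - z| ^ a ≤ (∫ u in Metric.ball 0 1, |u| ^ a) + ∫ x, g x := by
  have hbump := (integrableOn_abs_rpow_ball ha).integrable_indicator measurableSet_ball
  calc ∫ x, g x * |x - z| ^ a
      ≤ ∫ x, ((Metric.ball 0 1).indicator (fun u => |u| ^ a) (x - z) + g x) :=
        integral_mono (integrable_mul_abs_sub_rpow ha ha' hg hg0 hg1 z)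
          ((hbump.comp_sub_right z).add hg) (mul_abs_sub_rpow_le ha' hg0 hg1 z)
    _ = (∫ u in Metric.ball 0 1, |u| ^ a) + ∫ x, g x := by
        rw [integral_add (hbump.comp_sub_right z) hg, integral_sub_right_eq_self
          ((Metric.ball 0 1).indicator fun u => |u| ^ a) z, integral_indicator measurableSet_ball]

end RieszKernel

section Convolution

variable {a : ℝ} {g v : ℝ → ℝ}

theorem integral_norm_mul_mul_abs_sub_rpow (hg0 : ∀ x, 0 ≤ g x) (y : ℝ) :
    ∫ x, ‖g x * v y * |x - y| ^ a‖ = |v y| * ∫ x, g x * |x - y| ^ a := by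
  rw [← integral_const_mul]
  congr 1 with x
  rw [norm_mul, norm_mul, norm_of_nonneg (hg0 x), norm_of_nonneg (rpow_nonneg (abs_nonneg _) a),
    Real.norm_eq_abs]
  ring

theorem integrable_mul_mul_abs_sub_rpow (ha : -1 < a) (ha' : a ≤ 0) (hg : Integrable g)
    (hg0 : ∀ x, 0 ≤ g x) (hg1 : ∀ x, g x ≤ 1) (hv : Integrable v) :
    Integrable (fun p : ℝ × ℝ => g p.1 * v p.2 * |p.1 - p.2| ^ a) := by
  have hmeas : AEStronglyMeasurable (fun p : ℝ × ℝ => g p.1 * v p.2 * |p.1 - p.2| ^ a)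
      (volume.prod volume) :=
    (hg.aestronglyMeasurable.comp_fst.mul hv.aestronglyMeasurable.comp_snd).mul
      (by fun_prop : Measurable fun p : ℝ × ℝ => |p.1 - p.2| ^ a).aestronglyMeasurable
  rw [Measure.volume_eq_prod, integrable_prod_iff' hmeas]
  refine ⟨ae_of_all _ fun y => ?_, ?_⟩
  · simpa only [mul_right_comm] using
      (integrable_mul_abs_sub_rpow ha ha' hg hg0 hg1 y).mul_const (v y)
  · refine (hv.norm.mul_const ((∫ u in Metric.ball 0 1, |u| ^ a) + ∫ x, g x)).mono'
      hmeas.norm.prod_swap.integral_prod_right' (ae_of_all _ fun y => ?_)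
    rw [integral_norm_mul_mul_abs_sub_rpow hg0, Real.norm_eq_abs, Real.norm_eq_abs,
      abs_of_nonneg (mul_nonneg (abs_nonneg _) (integral_nonneg fun x =>
        mul_nonneg (hg0 x) (rpow_nonneg (abs_nonneg _) a)))]
    exact mul_le_mul_of_nonneg_left (integral_mul_abs_sub_rpow_le ha ha' hg hg0 hg1 y)
      (abs_nonneg _)

theorem integral_mul_mul_abs_sub_rpow_le (ha : -1 < a) (ha' : a ≤ 0) (hg : Integrable g)
    (hg0 : ∀ x, 0 ≤ g x) (hg1 : ∀ x, g x ≤ 1) (hv : Integrable v) (hv0 : ∀ y, 0 ≤ v y) :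
    ∫ p : ℝ × ℝ, g p.1 * v p.2 * |p.1 - p.2| ^ a ≤
      ((∫ u in Metric.ball 0 1, |u| ^ a) + ∫ x, g x) * ∫ y, v y := by
  have hint := integrable_mul_mul_abs_sub_rpow ha ha' hg hg0 hg1 hv
  rw [Measure.volume_eq_prod] at hint ⊢
  rw [integral_prod_symm _ hint, ← integral_const_mul]
  refine integral_mono_of_nonneg (ae_of_all _ fun y => integral_nonneg fun x => ?_)
    (hv.const_mul _) (ae_of_all _ fun y => ?_)
  · exact mul_nonneg (mul_nonneg (hg0 x) (hv0 y)) (rpow_nonneg (abs_nonneg _) a)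
  · simp only
    calc ∫ x, g x * v y * |x - y| ^ a = v y * ∫ x, g x * |x - y| ^ a := by
          rw [← integral_const_mul]; congr 1 with x; ring
      _ ≤ v y * ((∫ u in Metric.ball 0 1, |u| ^ a) + ∫ x, g x) :=
          mul_le_mul_of_nonneg_left (integral_mul_abs_sub_rpow_le ha ha' hg hg0 hg1 y) (hv0 y)
      _ = _ := mul_comm _ _

end Convolution

section Asymptotics

variable {r : ℝ}

theorem tendsto_log_const_mul_exp_div {b : ℝ} (hb : 0 < b) :
    Tendsto (fun t => log (b * exp (r * t)) / t) atTop (𝓝 r) := by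
  have h : Tendsto (fun t => r + log b / t) atTop (𝓝 r) := by
    simpa using (tendsto_const_nhds (x := r)).add
      ((tendsto_const_nhds (x := log b)).div_atTop tendsto_id)
  refine h.congr' ((eventually_gt_atTop 0).mono fun t ht => ?_)
  dsimp only
  rw [log_mul hb.ne' (exp_pos _).ne', log_exp]
  field_simp
  ring

theorem tendsto_log_div_of_le_of_le {f : ℝ → ℝ} {a b : ℝ} (ha : 0 < a)
    (hlo : ∀ᶠ t in atTop, a * exp (r * t) ≤ f t) (hhi : ∀ᶠ t in atTop, f t ≤ b * exp (r * t)) :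
    Tendsto (fun t => log (f t) / t) atTop (𝓝 r) := by
  obtain ⟨t, hlo_t, hhi_t⟩ := (hlo.and hhi).exists
  have hbt : 0 < b * exp (r * t) := (mul_pos ha (exp_pos _)).trans_le (hlo_t.trans hhi_t)
  have hb : 0 < b := pos_of_mul_pos_left hbt (exp_pos _).le
  refine tendsto_of_tendsto_of_tendsto_of_le_of_le' (tendsto_log_const_mul_exp_div ha)
    (tendsto_log_const_mul_exp_div hb) ?_ ?_
  · filter_upwards [hlo, eventually_gt_atTop 0] with t hlo_t ht
    gcongr
  · filter_upwards [hlo, hhi, eventually_gt_atTop 0] with t hlo_t hhi_t ht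
    have hf : 0 < f t := (mul_pos ha (exp_pos _)).trans_le hlo_t
    gcongr

end Asymptotics

namespace ComplementarySeries

noncomputable def weight (s x : ℝ) : ℝ := (1 + x ^ 2) ^ (-(1 + s) / 2)

variable {s t : ℝ}

theorem weight_pos (s x : ℝ) : 0 < weight s x := by unfold weight; positivity

theorem weight_le_weight (hs : -1 ≤ s) {x y : ℝ} (hxy : x ^ 2 ≤ y ^ 2) :
    weight s y ≤ weight s x :=
  rpow_le_rpow_of_nonpos (by positivity) (by linarith) (by linarith)

theorem weight_le_one (hs : -1 ≤ s) (x : ℝ) : weight s x ≤ 1 := by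
  simpa [weight] using weight_le_weight hs (x := 0) (y := x) (by simp [sq_nonneg])

theorem integrable_weight (hs : 0 < s) : Integrable (weight s) := by
  have h := integrable_rpow_neg_one_add_norm_sq (E := ℝ) (μ := volume) (r := 1 + s)
    (by simp [hs])
  simp only [Real.norm_eq_abs, sq_abs] at h
  exact h

theorem integral_weight_exp_mul (s t : ℝ) :
    ∫ y, weight s (exp (2 * t) * y) = exp (-(2 * t)) * ∫ y, weight s y := by
  rw [Measure.integral_comp_mul_left (weight s), abs_of_pos (inv_pos.2 (exp_pos _)), exp_neg,
    smul_eq_mul]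

theorem corrIntegrand_eq (s t : ℝ) : corrIntegrand s t =
    fun p => weight s p.1 * weight s (exp (2 * t) * p.2) * |p.1 - p.2| ^ (s - 1) := by
  ext p
  rw [corrIntegrand, weight, weight, mul_pow, ← exp_nat_mul]
  ring_nf

theorem integrable_corrIntegrand (hs0 : 0 < s) (hs1 : s < 1) (t : ℝ) :
    Integrable (corrIntegrand s t) := by
  rw [corrIntegrand_eq]
  exact integrable_mul_mul_abs_sub_rpow (a := s - 1) (by linarith) (by linarith)
    (integrable_weight hs0) (fun x => (weight_pos s x).le) (weight_le_one (by linarith))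
    ((integrable_weight hs0).comp_mul_left' (exp_pos (2 * t)).ne')

theorem exp_mul_integral_corrIntegrand_le (hs0 : 0 < s) (hs1 : s < 1) (t : ℝ) :
    exp (2 * t) * ∫ p, corrIntegrand s t p ≤
      ((∫ u in Metric.ball 0 1, |u| ^ (s - 1)) + ∫ x, weight s x) * ∫ y, weight s y := by
  have h := integral_mul_mul_abs_sub_rpow_le (a := s - 1) (by linarith) (by linarith)
    (integrable_weight hs0) (fun x => (weight_pos s x).le) (weight_le_one (by linarith))
    ((integrable_weight hs0).comp_mul_left' (exp_pos (2 * t)).ne') (fun y => (weight_pos s _).le)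
  rw [integral_weight_exp_mul, ← corrIntegrand_eq] at h
  calc exp (2 * t) * ∫ p, corrIntegrand s t p
      ≤ exp (2 * t) * (((∫ u in Metric.ball 0 1, |u| ^ (s - 1)) + ∫ x, weight s x) *
          (exp (-(2 * t)) * ∫ y, weight s y)) := by gcongr
    _ = _ := by rw [exp_neg]; field_simp

theorem corrIntegrand_nonneg (s t : ℝ) (p : ℝ × ℝ) : 0 ≤ corrIntegrand s t p := by
  unfold corrIntegrand; positivity

theorem weight_le_corrIntegrand (hs₀ : -1 ≤ s) (hs₁ : s ≤ 1) (ht : 0 ≤ t) {p : ℝ × ℝ}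
    (hp : p ∈ Icc (2 : ℝ) 3 ×ˢ Icc 0 (exp (-(2 * t)))) :
    weight s 3 * weight s 1 * 3 ^ (s - 1) ≤ corrIntegrand s t p := by
  obtain ⟨⟨hx2, hx3⟩, hy0, hyε⟩ := hp
  have hy1 : p.2 ≤ 1 := hyε.trans (exp_le_one_iff.2 (by linarith))
  have hεy : exp (2 * t) * p.2 ≤ 1 := by
    calc exp (2 * t) * p.2 ≤ exp (2 * t) * exp (-(2 * t)) := by gcongr
      _ = 1 := by rw [← exp_add, add_neg_cancel, exp_zero]
  have hw3 : weight s 3 ≤ weight s p.1 := weight_le_weight hs₀ (by nlinarith)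
  have hw1 : weight s 1 ≤ weight s (exp (2 * t) * p.2) :=
    weight_le_weight hs₀ (by rw [one_pow]; exact pow_le_one₀ (by positivity) hεy)
  have hxy : (3 : ℝ) ^ (s - 1) ≤ |p.1 - p.2| ^ (s - 1) := by
    rw [abs_of_pos (by linarith)]
    exact rpow_le_rpow_of_nonpos (by linarith) (by linarith) (by linarith)
  rw [corrIntegrand_eq]
  exact mul_le_mul (mul_le_mul hw3 hw1 (weight_pos s 1).le (weight_pos s _).le) hxy
    (by positivity) (mul_nonneg (weight_pos s _).le (weight_pos s _).le)

theorem le_exp_mul_integral_corrIntegrand (hs0 : 0 < s) (hs1 : s < 1) (ht : 0 ≤ t) :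
    weight s 3 * weight s 1 * 3 ^ (s - 1) ≤ exp (2 * t) * ∫ p, corrIntegrand s t p := by
  set S := Icc (2 : ℝ) 3 ×ˢ Icc 0 (exp (-(2 * t)))
  have hS : volume S = ENNReal.ofReal (exp (-(2 * t))) := by
    rw [Measure.volume_eq_prod, Measure.prod_prod, Real.volume_Icc, Real.volume_Icc]
    norm_num
  have hint := integrable_corrIntegrand hs0 hs1 t
  calc weight s 3 * weight s 1 * 3 ^ (s - 1)
      = exp (2 * t) * (weight s 3 * weight s 1 * 3 ^ (s - 1) * volume.real S) := by
        rw [measureReal_def, hS, ENNReal.toReal_ofReal (exp_pos _).le, exp_neg]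
        field_simp
    _ ≤ exp (2 * t) * ∫ p in S, corrIntegrand s t p := by
        gcongr
        exact setIntegral_ge_of_const_le_real (measurableSet_Icc.prod measurableSet_Icc)
          (by simp [hS]) (fun p hp => weight_le_corrIntegrand (by linarith) hs1.le ht hp)
          hint.integrableOn
    _ ≤ exp (2 * t) * ∫ p, corrIntegrand s t p :=
        mul_le_mul_of_nonneg_left
          (setIntegral_le_integral hint (ae_of_all _ (corrIntegrand_nonneg s t))) (exp_pos _).le

theorem corrK_eq (s : ℝ) (c : ℂ) (t : ℝ) :
    corrK s c t = ‖c‖ ^ 2 * (exp (2 * t) * ∫ p, corrIntegrand s t p) * exp ((-1 + s) * t) := by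
  have h : exp (t * (1 + s)) = exp (2 * t) * exp ((-1 + s) * t) := by
    rw [← exp_add]
    ring_nf
  rw [corrK, h]
  ring

end ComplementarySeries

open ComplementarySeries

/-- For `0 < s < 1` and `c ≠ 0`, the correlation `K(t)` is finite and strictly positive
for every `t ≥ 0`, and `(1/t)·ln K(t) → −1 + s` as `t → +∞`: the correlations of the
complementary series decay exponentially at exactly the rate `e^{−(1−s)t}`. -/
theorem complementary_series_correlation (s : ℝ) (hs0 : 0 < s) (hs1 : s < 1)
    (c : ℂ) (hc : c ≠ 0) :
    (∀ t : ℝ, 0 ≤ t → Integrable (corrIntegrand s t) ∧ 0 < corrK s c t) ∧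
    Filter.Tendsto (fun t : ℝ => Real.log (corrK s c t) / t)
      Filter.atTop (nhds (-1 + s)) := by
  set κ := weight s 3 * weight s 1 * 3 ^ (s - 1)
  have hκ : 0 < κ := by have := weight_pos s 3; have := weight_pos s 1; positivity
  have hlo : ∀ t, 0 ≤ t → ‖c‖ ^ 2 * κ * exp ((-1 + s) * t) ≤ corrK s c t := fun t ht => by
    rw [corrK_eq]
    gcongr
    exact le_exp_mul_integral_corrIntegrand hs0 hs1 ht
  have hhi : ∀ t, corrK s c t ≤ ‖c‖ ^ 2 *
      (((∫ u in Metric.ball 0 1, |u| ^ (s - 1)) + ∫ x, weight s x) * ∫ y, weight s y) *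
        exp ((-1 + s) * t) := fun t => by
    rw [corrK_eq]
    gcongr ‖c‖ ^ 2 * ?_ * _
    exact exp_mul_integral_corrIntegrand_le hs0 hs1 t
  have hcκ : 0 < ‖c‖ ^ 2 * κ := by positivity
  refine ⟨fun t ht => ⟨integrable_corrIntegrand hs0 hs1 t, ?_⟩, ?_⟩
  · exact (mul_pos hcκ (exp_pos _)).trans_le (hlo t ht)
  · exact tendsto_log_div_of_le_of_le hcκ ((eventually_ge_atTop 0).mono hlo)
      (Eventually.of_forall hhi)
end

section
/- Let π be an irreducible permutation pair and let τ ∈ closure(Θ_π) with τ ≠ 0. Then the vector h = −Ω(π)·τ, whose coordinates are h_ξ = Σ_{π_t(α) < π_t(ξ)} τ_α − Σ_{π_b(α) < π_b(ξ)} τ_α, satisfies h_ξ ≥ 0 for every ξ ∈ 𝒜 and h ≠ 0. -/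
/-!
On the closure of `Θ_π` the top prefix sums of `τ` are `≥ 0` and the bottom ones `≤ 0`, and
`h_ξ` is a top prefix sum minus a bottom one, so `h ≥ 0`. If `h = 0`, all prefix sums of length
`< d` vanish on both rows; consecutive differences then kill `τ` on every letter that is not last
on top, and on every letter that is not last on the bottom. Irreducibility (at `k = d - 1`) says
no letter is last on both rows, so `τ = 0`.
-/

open scoped BigOperators
open Matrix

namespace Rauzy

variable {A : Type} [Fintype A] [DecidableEq A]

/-- The antisymmetric operator `Ω(π)`: `⟨Ω(π)·e_x, e_y⟩ = 1` if `π_t(x) > π_t(y)` and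
`π_b(x) < π_b(y)`, `= -1` in the symmetric case, `= 0` otherwise. -/
noncomputable def OmegaMat (π : PermPair A) : Matrix A A ℝ := fun a b =>
  if (π.top a : ℕ) < (π.top b : ℕ) ∧ (π.bot b : ℕ) < (π.bot a : ℕ) then 1
  else if (π.top b : ℕ) < (π.top a : ℕ) ∧ (π.bot a : ℕ) < (π.bot b : ℕ) then -1
  else 0

/-- The height vector `h` with coordinates
`h_ξ = Σ_{π_t(α) < π_t(ξ)} τ_α − Σ_{π_b(α) < π_b(ξ)} τ_α`. -/
noncomputable def hVec (π : PermPair A) (τ : A → ℝ) : A → ℝ := fun ξ =>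
  (∑ a ∈ Finset.univ.filter (fun a => (π.top a : ℕ) < (π.top ξ : ℕ)), τ a) -
  (∑ a ∈ Finset.univ.filter (fun a => (π.bot a : ℕ) < (π.bot ξ : ℕ)), τ a)

end Rauzy

namespace Rauzy

section PrefixSum

variable {A M : Type} [Fintype A] [AddCommMonoid M] {n : ℕ}

def prefixSum (e : A ≃ Fin n) (τ : A → M) (k : ℕ) : M :=
  ∑ a ∈ Finset.univ.filter (fun a => (e a : ℕ) < k), τ a

@[simp]
lemma prefixSum_zero (e : A ≃ Fin n) (τ : A → M) : prefixSum e τ 0 = 0 := by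
  simp [prefixSum]

lemma prefixSum_succ_apply (e : A ≃ Fin n) (τ : A → M) (ξ : A) :
    prefixSum e τ (e ξ + 1) = prefixSum e τ (e ξ) + τ ξ := by
  have hfilter : Finset.univ.filter (fun a => (e a : ℕ) < e ξ + 1) =
      Finset.cons ξ (Finset.univ.filter (fun a => (e a : ℕ) < e ξ)) (by simp) := by
    ext a
    simp only [Finset.mem_filter, Finset.mem_cons, Finset.mem_univ, true_and,
      Nat.lt_succ_iff_lt_or_eq, Fin.val_inj, e.apply_eq_iff_eq]
    tauto
  rw [prefixSum, hfilter, Finset.sum_cons, add_comm]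
  rfl

lemma apply_eq_zero_of_prefixSum_eq_zero {e : A ≃ Fin n} {τ : A → M}
    (h : ∀ k < n, prefixSum e τ k = 0) {ξ : A} (hξ : (e ξ : ℕ) + 1 < n) : τ ξ = 0 := by
  have hsucc := prefixSum_succ_apply e τ ξ
  rwa [h _ hξ, h _ (by omega), zero_add, eq_comm] at hsucc

lemma continuous_prefixSum [TopologicalSpace M] [ContinuousAdd M] (e : A ≃ Fin n) (k : ℕ) :
    Continuous fun τ : A → M => prefixSum e τ k :=
  continuous_finsetSum _ fun a _ => continuous_apply a

end PrefixSum

lemma setOf_val_lt_pred_eq_compl {A : Type} {n : ℕ} (e : A ≃ Fin n) {ξ : A}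
    (hξ : (e ξ : ℕ) + 1 = n) :
    {a | (e a : ℕ) < n - 1} = {ξ}ᶜ := by
  ext a
  have := (e a).isLt
  rw [Set.mem_ofPred_eq, Set.mem_compl_singleton_iff, Ne, ← e.apply_eq_iff_eq, ← Fin.val_inj]
  omega

variable {A : Type} [Fintype A]

def closedTheta (π : PermPair A) : Set (A → ℝ) :=
  {τ | ∀ k < Fintype.card A, 0 ≤ prefixSum π.top τ k ∧ prefixSum π.bot τ k ≤ 0}

lemma isClosed_closedTheta (π : PermPair A) : IsClosed (closedTheta π) := by
  simp only [closedTheta, Set.ofPred_forall, Set.ofPred_and]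
  exact isClosed_iInter fun k => isClosed_iInter fun _ =>
    (isClosed_le continuous_const (continuous_prefixSum _ k)).inter
      (isClosed_le (continuous_prefixSum _ k) continuous_const)

lemma Theta_subset_closedTheta (π : PermPair A) : Theta π ⊆ closedTheta π := by
  intro τ hτ k hk
  rcases Nat.eq_zero_or_pos k with rfl | hk0
  · simp
  · exact ⟨(hτ k hk0 hk).1.le, (hτ k hk0 hk).2.le⟩

lemma closure_Theta_subset_closedTheta (π : PermPair A) : closure (Theta π) ⊆ closedTheta π :=
  closure_minimal (Theta_subset_closedTheta π) (isClosed_closedTheta π)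

lemma hVec_apply (π : PermPair A) (τ : A → ℝ) (ξ : A) :
    hVec π τ ξ = prefixSum π.top τ (π.top ξ) - prefixSum π.bot τ (π.bot ξ) :=
  rfl

lemma neg_OmegaMat_apply (π : PermPair A) (ξ a : A) :
    -OmegaMat π ξ a = (if (π.top a : ℕ) < π.top ξ then 1 else 0) -
      (if (π.bot a : ℕ) < π.bot ξ then 1 else 0) := by
  rcases eq_or_ne a ξ with rfl | hne
  · simp [OmegaMat]
  have htop : (π.top a : ℕ) ≠ π.top ξ := by simpa [Fin.val_inj] using hne
  have hbot : (π.bot a : ℕ) ≠ π.bot ξ := by simpa [Fin.val_inj] using hne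
  unfold OmegaMat
  split_ifs <;> first | omega | norm_num

lemma hVec_eq_neg_mulVec (π : PermPair A) (τ : A → ℝ) :
    hVec π τ = -(OmegaMat π *ᵥ τ) := by
  funext ξ
  simp only [hVec_apply, prefixSum, Finset.sum_filter, Pi.neg_apply, mulVec, dotProduct,
    ← Finset.sum_neg_distrib, ← neg_mul, neg_OmegaMat_apply, sub_mul, ite_mul, one_mul,
    zero_mul, Finset.sum_sub_distrib]

lemma hVec_nonneg {π : PermPair A} {τ : A → ℝ} (hτ : τ ∈ closedTheta π) (ξ : A) :
    0 ≤ hVec π τ ξ := by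
  rw [hVec_apply]
  linarith [(hτ _ (π.top ξ).isLt).1, (hτ _ (π.bot ξ).isLt).2]

lemma prefixSum_eq_zero_of_hVec_eq_zero {π : PermPair A} {τ : A → ℝ} (hτ : τ ∈ closedTheta π)
    (h : hVec π τ = 0) (k : ℕ) (hk : k < Fintype.card A) :
    prefixSum π.top τ k = 0 ∧ prefixSum π.bot τ k = 0 := by
  have hξ (ξ : A) : prefixSum π.top τ (π.top ξ) = 0 ∧ prefixSum π.bot τ (π.bot ξ) = 0 := by
    have h0 : hVec π τ ξ = 0 := congrFun h ξ
    rw [hVec_apply] at h0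
    have := hτ _ (π.top ξ).isLt
    have := hτ _ (π.bot ξ).isLt
    constructor <;> linarith
  refine ⟨?_, ?_⟩
  · simpa using (hξ (π.top.symm ⟨k, hk⟩)).1
  · simpa using (hξ (π.bot.symm ⟨k, hk⟩)).2

lemma Irreducible.top_lt_or_bot_lt {π : PermPair A} (hirr : Irreducible π)
    (hd : 2 ≤ Fintype.card A) (ξ : A) :
    (π.top ξ : ℕ) + 1 < Fintype.card A ∨ (π.bot ξ : ℕ) + 1 < Fintype.card A := by
  by_contra! hlast
  refine hirr (Fintype.card A - 1) (by omega) (by omega) ?_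
  have := (π.top ξ).isLt
  have := (π.bot ξ).isLt
  rw [setOf_val_lt_pred_eq_compl π.top (ξ := ξ) (by omega),
    setOf_val_lt_pred_eq_compl π.bot (ξ := ξ) (by omega)]

variable [DecidableEq A]

/-- For `π` irreducible and `τ ∈ closure(Θ_π) ∖ {0}`, the vector `h = −Ω(π)·τ`, whose
coordinates are given by `hVec`, is nonnegative and nonzero. -/
theorem height_vector_nonneg (hd : 2 ≤ Fintype.card A)
    (π : PermPair A) (hirr : Irreducible π)
    (τ : A → ℝ) (hτ : τ ∈ closure (Theta π)) (hne : τ ≠ 0) :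
    hVec π τ = -((OmegaMat π).mulVec τ) ∧
    (∀ ξ : A, 0 ≤ hVec π τ ξ) ∧ hVec π τ ≠ 0 := by
  have hτ' := closure_Theta_subset_closedTheta π hτ
  refine ⟨hVec_eq_neg_mulVec π τ, hVec_nonneg hτ', fun h0 => hne (funext fun ξ => ?_)⟩
  have hzero := prefixSum_eq_zero_of_hVec_eq_zero hτ' h0
  rcases hirr.top_lt_or_bot_lt hd ξ with hξ | hξ
  · exact apply_eq_zero_of_prefixSum_eq_zero (fun k hk => (hzero k hk).1) hξ
  · exact apply_eq_zero_of_prefixSum_eq_zero (fun k hk => (hzero k hk).2) hξ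

end Rauzy
end

section
/- Let π be an irreducible permutation pair. Then the vector τ ∈ ℝ^𝒜 with coordinates τ_ξ = π_b(ξ) − π_t(ξ) belongs to Θ_π; in particular, Θ_π is a nonempty open convex polyhedral cone. -/
/-!
Fix `0 < k < d` and let `S = {ξ | π_t ξ < k}`. The top positions of the letters of `S` are
exactly `0, …, k - 1`, while their bottom positions are `k` distinct naturals forming a different
set, by irreducibility. Exchanging `S` for `{ξ | π_b ξ < k}` trades bottom positions `≥ k` for
bottom positions `< k`, so `∑_{ξ ∈ S} π_b ξ > ∑_{ξ ∈ S} π_t ξ`; symmetrically for the bottom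
sums. The cone properties hold because `Θ_π` is a finite intersection of open half-spaces.
-/

open scoped BigOperators
open Matrix

open Finset

section
variable {α M : Type*} [DecidableEq α] [AddCommMonoid M] [PartialOrder M]
  [IsOrderedCancelAddMonoid M]

theorem Finset.sum_lt_sum_of_card_eq_of_sdiff {s t : Finset α} {g : α → M} {c : M}
    (hcard : #s = #t) (hne : s ≠ t) (hs : ∀ x ∈ s \ t, c ≤ g x)
    (ht : ∀ x ∈ t \ s, g x < c) : ∑ x ∈ t, g x < ∑ x ∈ s, g x := by
  have hts : (t \ s).Nonempty :=
    sdiff_nonempty.2 fun hsub => hne (eq_of_subset_of_card_le hsub hcard.le).symm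
  calc ∑ x ∈ t, g x = ∑ x ∈ t ∩ s, g x + ∑ x ∈ t \ s, g x :=
        (sum_inter_add_sum_sdiff t s g).symm
    _ < ∑ x ∈ s ∩ t, g x + #(s \ t) • c := by
      rw [inter_comm, card_sdiff_comm hcard, ← sum_const]
      exact (add_lt_add_iff_left _).2 (sum_lt_sum_of_nonempty hts ht)
    _ ≤ ∑ x ∈ s ∩ t, g x + ∑ x ∈ s \ t, g x := by
      gcongr
      exact card_nsmul_le_sum _ _ _ hs
    _ = ∑ x ∈ s, g x := sum_inter_add_sum_sdiff s t g
end

section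
variable {α M : Type*} [Fintype α] [AddCommMonoid M] {n k : ℕ}

theorem Equiv.sum_filter_val_lt (e : α ≃ Fin n) (φ : ℕ → M) (hk : k ≤ n) :
    ∑ x ∈ univ.filter (fun x => (e x : ℕ) < k), φ (e x) = ∑ i ∈ range k, φ i := by
  rw [sum_filter, e.sum_comp (fun i : Fin n => if (i : ℕ) < k then φ i else 0),
    Fin.sum_univ_eq_sum_range (fun i => if i < k then φ i else 0), ← sum_filter]
  congr 1
  ext i
  simp only [mem_filter, mem_range]
  omega

theorem Equiv.card_filter_val_lt (e : α ≃ Fin n) (hk : k ≤ n) :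
    #(univ.filter (fun x => (e x : ℕ) < k)) = k := by
  rw [card_eq_sum_ones, e.sum_filter_val_lt (fun _ => 1) hk, sum_const, card_range, smul_eq_mul,
    mul_one]
end

theorem Equiv.sum_val_lt_sum_val_of_filter_ne {α : Type*} [Fintype α] [DecidableEq α] {n k : ℕ}
    (f g : α ≃ Fin n) (hk : k ≤ n)
    (hne : univ.filter (fun x => (f x : ℕ) < k) ≠ univ.filter (fun x => (g x : ℕ) < k)) :
    ∑ x ∈ univ.filter (fun x => (f x : ℕ) < k), (f x : ℕ) <
      ∑ x ∈ univ.filter (fun x => (f x : ℕ) < k), (g x : ℕ) := by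
  rw [f.sum_filter_val_lt (fun i => i) hk, ← g.sum_filter_val_lt (fun i => i) hk]
  refine sum_lt_sum_of_card_eq_of_sdiff (c := k)
    ((f.card_filter_val_lt hk).trans (g.card_filter_val_lt hk).symm) hne ?_ ?_
  · intro x hx
    simp only [mem_sdiff, mem_filter, mem_univ, true_and] at hx
    exact not_lt.1 hx.2
  · intro x hx
    simp only [mem_sdiff, mem_filter, mem_univ, true_and] at hx
    exact hx.1

theorem isLinearMap_sum_apply {α R : Type*} [CommSemiring R] (s : Finset α) :
    IsLinearMap R (fun τ : α → R => ∑ x ∈ s, τ x) :=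
  ⟨fun _ _ => sum_add_distrib, fun c τ => by simp only [Pi.smul_apply, smul_eq_mul, mul_sum]⟩

namespace Rauzy

section
variable {A : Type} [Fintype A]

theorem filter_ne_of_irreducible {π : PermPair A} (hirr : Irreducible π) {k : ℕ} (hk₀ : 0 < k)
    (hk : k < Fintype.card A) :
    univ.filter (fun ξ => (π.top ξ : ℕ) < k) ≠ univ.filter (fun ξ => (π.bot ξ : ℕ) < k) :=
  fun h => hirr k hk₀ hk (by simpa using congrArg (fun s : Finset A => (s : Set A)) h)

theorem bot_sub_top_mem_theta [DecidableEq A] {π : PermPair A} (hirr : Irreducible π) :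
    (fun ξ : A => ((π.bot ξ : ℕ) : ℝ) - ((π.top ξ : ℕ) : ℝ)) ∈ Theta π := by
  intro k hk₀ hk
  have hne := filter_ne_of_irreducible hirr hk₀ hk
  have htop := π.top.sum_val_lt_sum_val_of_filter_ne π.bot hk.le hne
  have hbot := π.bot.sum_val_lt_sum_val_of_filter_ne π.top hk.le hne.symm
  simp only [sum_sub_distrib, sub_pos, sub_neg]
  exact ⟨by exact_mod_cast htop, by exact_mod_cast hbot⟩

theorem theta_eq_iInter (π : PermPair A) :
    Theta π = ⋂ k ∈ Ioo 0 (Fintype.card A),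
      {τ | 0 < ∑ ξ ∈ univ.filter (fun ξ => (π.top ξ : ℕ) < k), τ ξ} ∩
      {τ | ∑ ξ ∈ univ.filter (fun ξ => (π.bot ξ : ℕ) < k), τ ξ < 0} := by
  ext τ
  simp [Theta]

theorem isOpen_theta (π : PermPair A) : IsOpen (Theta π) := by
  rw [theta_eq_iInter]
  refine isOpen_biInter_finset fun k _ => IsOpen.inter ?_ ?_
  · exact isOpen_lt continuous_const (continuous_finsetSum _ fun ξ _ => continuous_apply ξ)
  · exact isOpen_lt (continuous_finsetSum _ fun ξ _ => continuous_apply ξ) continuous_const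

theorem convex_theta (π : PermPair A) : Convex ℝ (Theta π) := by
  rw [theta_eq_iInter]
  exact convex_iInter₂ fun k _ =>
    (convex_halfSpace_gt (isLinearMap_sum_apply _) 0).inter
      (convex_halfSpace_lt (isLinearMap_sum_apply _) 0)

theorem smul_mem_theta {π : PermPair A} {c : ℝ} (hc : 0 < c) {τ : A → ℝ} (hτ : τ ∈ Theta π) :
    c • τ ∈ Theta π := by
  intro k hk₀ hk
  simp only [(isLinearMap_sum_apply _).map_smul, smul_eq_mul]
  exact ⟨mul_pos hc (hτ k hk₀ hk).1, mul_neg_of_pos_of_neg hc (hτ k hk₀ hk).2⟩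

end

variable {A : Type} [Fintype A] [DecidableEq A]

theorem theta_nonempty_open_convex_cone_general
    (π : PermPair A) (hirr : Irreducible π) :
    (fun ξ : A => ((π.bot ξ : ℕ) : ℝ) - ((π.top ξ : ℕ) : ℝ)) ∈ Theta π ∧
    (Theta π).Nonempty ∧ IsOpen (Theta π) ∧ Convex ℝ (Theta π) ∧
    ∀ c : ℝ, 0 < c → ∀ τ ∈ Theta π, c • τ ∈ Theta π :=
  ⟨bot_sub_top_mem_theta hirr, ⟨_, bot_sub_top_mem_theta hirr⟩, isOpen_theta π, convex_theta π,
    fun _ hc _ hτ => smul_mem_theta hc hτ⟩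

/-- For `π` irreducible, the vector `τ_ξ = π_b(ξ) − π_t(ξ)` belongs to `Θ_π`;
in particular, `Θ_π` is a nonempty open convex cone. -/
theorem theta_nonempty_open_convex_cone (hd : 2 ≤ Fintype.card A)
    (π : PermPair A) (hirr : Irreducible π) :
    (fun ξ : A => ((π.bot ξ : ℕ) : ℝ) - ((π.top ξ : ℕ) : ℝ)) ∈ Theta π ∧
    (Theta π).Nonempty ∧ IsOpen (Theta π) ∧ Convex ℝ (Theta π) ∧
    ∀ c : ℝ, 0 < c → ∀ τ ∈ Theta π, c • τ ∈ Theta π :=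
  theta_nonempty_open_convex_cone_general π hirr

end Rauzy
end
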